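/- The map ζ that reverses words and swaps the letters x and y permutes the set of Catalan words and preserves the Catalan coefficient: for every Catalan word w, ζ(w) is Catalan and C(ζ(w)) = C(w), where C(a_1⋯a_{2n}) = ∏_{i=0}^{2n} [1 + ā_1 + ⋯ + ā_i]_q. Consequently ζ fixes the Catalan element C_n = ∑_{w ∈ Cat_n} w · C(w) for all n. -/

import Mathlib

open scoped Classical

inductive Letter | x | y
deriving DecidableEq

instance : Fintype Letter := ⟨{Letter.x, Letter.y}, fun a => by cases a <;> simp⟩

/-- x ↦ 1, y ↦ -1 -/
def bar : Letter → ℤ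
  | .x => 1
  | .y => -1

/-- σ swaps the letters x and y. -/
def sigma : Letter → Letter
  | .x => .y
  | .y => .x

/-- the pairing ⟨u,v⟩ : 2 if u = v, -2 otherwise. -/
def pair : Letter → Letter → ℤ := fun u v => if u = v then 2 else -2

noncomputable section

/-- The free associative algebra on the two letters x, y (with its word basis). -/
abbrev V (F : Type*) [Field F] := MonoidAlgebra F (FreeMonoid Letter)

variable {F : Type*} [Field F]

/-- the basis word of V corresponding to a list of letters -/
def wd (w : List Letter) : V F := MonoidAlgebra.single (FreeMonoid.ofList w) 1

/-- the q-shuffle product of two words, by the left recursion -/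
def shuffleWord (q : F) : List Letter → List Letter → V F
  | [], v => wd v
  | u1 :: ut, [] => wd (u1 :: ut)
  | u1 :: ut, v1 :: vt =>
      wd [u1] * shuffleWord q ut (v1 :: vt)
      + q ^ (((u1 :: ut).map (fun a => pair a v1)).sum) •
          (wd [v1] * shuffleWord q (u1 :: ut) vt)
termination_by u v => u.length + v.length

/-- the q-shuffle product on V, extended bilinearly -/
def shuffle (q : F) (a b : V F) : V F :=
  a.coeff.sum fun u cu => b.coeff.sum fun v cv =>
    (cu * cv) • shuffleWord q (FreeMonoid.toList u) (FreeMonoid.toList v)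

/-- the quantum integer [m]_q -/
def qint (q : F) (m : ℤ) : F := (q ^ m - q ^ (-m)) / (q - q⁻¹)

/-- the quantum factorial [m]_q! -/
def qfac (q : F) (m : ℤ) : F := ∏ j ∈ Finset.range m.toNat, qint q ((j : ℤ) + 1)

/-- e_i = ā_1 + ⋯ + ā_i, the i-th elevation of the word w -/
def esum (w : List Letter) (i : ℕ) : ℤ := ((w.take i).map bar).sum

/-- A word is Catalan when all partial sums of bar are nonnegative and the total is zero. -/
def IsCatalan (w : List Letter) : Prop :=
  (∀ i, i ≤ w.length → 0 ≤ esum w i) ∧ esum w w.length = 0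

/-- the coefficient C(w) = ∏_{i=0}^{2n} [1 + e_i]_q -/
def Ccoef (q : F) (w : List Letter) : F :=
  ∏ i ∈ Finset.range (w.length + 1), qint q (1 + esum w i)

/-- the n-th Catalan element C_n = ∑_{w ∈ Cat_n} C(w) w  -/
def catalanElt (q : F) (n : ℕ) : V F :=
  ∑ f : Fin (2 * n) → Letter,
    if IsCatalan (List.ofFn f) then Ccoef q (List.ofFn f) • wd (List.ofFn f) else 0

/-- the antiautomorphism ζ : reverse the word and swap x,y, extended linearly -/
def zeta (a : V F) : V F :=
  a.coeff.sum fun w c =>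
    MonoidAlgebra.single (FreeMonoid.ofList (((FreeMonoid.toList w).map sigma).reverse)) c

/-- The profile of a word: delete from the elevation sequence every interior e_i
    such that e_{i+1}-e_i and e_i-e_{i-1} have the same sign. -/
def profile (w : List Letter) : List ℤ :=
  (List.range (w.length + 1)).filterMap fun i =>
    if i = 0 ∨ i = w.length then some (esum w i)
    else if 0 < (esum w (i + 1) - esum w i) * (esum w i - esum w (i - 1)) then none
    else some (esum w i)

/-- The list (ℓ_0, h_1, ℓ_1, h_2, …, h_r, ℓ_r). -/
def P (r : ℕ) (ℓ h : ℕ → ℤ) : List ℤ :=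
  List.ofFn fun i : Fin (2 * r + 1) =>
    if i.val % 2 = 0 then ℓ (i.val / 2) else h ((i.val + 1) / 2)

/-- the word x^{h_1} y^{h_1-ℓ_1} x^{h_2-ℓ_1} y^{h_2-ℓ_2} ⋯ x^{h_r-ℓ_{r-1}} y^{h_r} -/
def explicitWord (r : ℕ) (ℓ h : ℕ → ℤ) : List Letter :=
  (List.range r).flatMap fun i =>
    List.replicate (h (i + 1) - ℓ i).toNat Letter.x ++
      List.replicate (h (i + 1) - ℓ (i + 1)).toNat Letter.y

/-- C(ℓ_0,h_1,…,h_r,ℓ_r), the ratio of q-factorials attached to a profile. -/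
def Cprof (q : F) (r : ℕ) (ℓ h : ℕ → ℤ) : F :=
  (∏ i ∈ Finset.Icc 1 r, qfac q (h i) * qfac q (h i + 1)) /
    (∏ i ∈ Finset.range (r + 1), qfac q (ℓ i) * qfac q (ℓ i + 1))

end

/-!
Since ā(σ a) = -ā, the elevations of ζ(w) are those of w read backwards and shifted by the total
elevation of w, which is zero for a Catalan word. Hence ζ(w) is Catalan and C(ζ(w)) is the
product defining C(w) taken in reverse order. As ζ is an involution of the words of each length,
it permutes the terms of C_n.
-/

lemma sigma_involutive : Function.Involutive sigma := by
  intro a; cases a <;> rfl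

lemma bar_sigma (a : Letter) : bar (sigma a) = -bar a := by
  cases a <;> rfl

def zetaWord (w : List Letter) : List Letter := (w.map sigma).reverse

lemma zetaWord_involutive : Function.Involutive zetaWord := by
  intro w
  rw [zetaWord, zetaWord, List.map_reverse, List.reverse_reverse, List.map_map,
    sigma_involutive.comp_self, List.map_id]

@[simp]
lemma length_zetaWord (w : List Letter) : (zetaWord w).length = w.length := by
  simp [zetaWord]

lemma ofFn_sigma_rev {n : ℕ} (f : Fin n → Letter) :
    List.ofFn (fun i => sigma (f i.rev)) = zetaWord (List.ofFn f) := by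
  apply List.ext_getElem (by simp)
  intro i h₁ h₂
  simp only [zetaWord, List.getElem_ofFn, List.getElem_reverse, List.getElem_map]
  congr 2
  ext
  simp only [List.length_ofFn] at h₁
  simp only [Fin.val_rev, List.length_map, List.length_ofFn]
  omega

lemma esum_add_sum_drop (w : List Letter) (k : ℕ) :
    esum w k + ((w.drop k).map bar).sum = esum w w.length := by
  rw [esum, esum, List.take_length, ← List.sum_append, ← List.map_append,
    List.take_append_drop]

lemma esum_zetaWord (w : List Letter) (i : ℕ) :
    esum (zetaWord w) i = esum w (w.length - i) - esum w w.length := by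
  have hsplit := esum_add_sum_drop w (w.length - i)
  have hneg : bar ∘ sigma = (fun x => -x) ∘ bar := funext bar_sigma
  rw [esum, zetaWord, List.take_reverse, List.map_reverse, List.sum_reverse, List.length_map,
    ← List.map_drop, List.map_map, hneg, ← List.map_map, ← List.sum_neg]
  linarith

section Catalan

variable {w : List Letter}

lemma IsCatalan.esum_zetaWord (hw : IsCatalan w) (i : ℕ) :
    esum (zetaWord w) i = esum w (w.length - i) := by
  rw [_root_.esum_zetaWord, hw.2, sub_zero]

lemma IsCatalan.zetaWord (hw : IsCatalan w) : IsCatalan (zetaWord w) := by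
  refine ⟨fun i _ => ?_, ?_⟩
  · rw [hw.esum_zetaWord]
    exact hw.1 _ (Nat.sub_le _ _)
  · rw [length_zetaWord, hw.esum_zetaWord, Nat.sub_self]
    rfl

lemma isCatalan_zetaWord_iff : IsCatalan (zetaWord w) ↔ IsCatalan w :=
  ⟨fun h => zetaWord_involutive w ▸ h.zetaWord, IsCatalan.zetaWord⟩

lemma Ccoef_zetaWord {F : Type*} [Field F] (q : F) (hw : IsCatalan w) :
    Ccoef q (zetaWord w) = Ccoef q w := by
  rw [Ccoef, Ccoef, length_zetaWord, ← Finset.prod_range_reflect]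
  refine Finset.prod_congr rfl fun i hi => ?_
  have hi : i ≤ w.length := Nat.lt_succ_iff.mp (Finset.mem_range.mp hi)
  rw [hw.esum_zetaWord, Nat.add_sub_cancel, Nat.sub_sub_self hi]

end Catalan

section Zeta

variable {F : Type*} [Field F]

lemma zeta_eq_mapDomainLinearMap (a : V F) :
    zeta a = MonoidAlgebra.mapDomainLinearMap F F
      (fun u => FreeMonoid.ofList (zetaWord (FreeMonoid.toList u))) a := by
  conv_rhs => rw [← MonoidAlgebra.sum_coeff_single a]
  rw [zeta, Finsupp.sum, Finsupp.sum, map_sum]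
  simp only [MonoidAlgebra.mapDomainLinearMap_single]
  rfl

lemma zeta_smul_wd (c : F) (w : List Letter) : zeta (c • wd w) = c • (wd (zetaWord w) : V F) := by
  rw [zeta_eq_mapDomainLinearMap, map_smul, wd, wd, MonoidAlgebra.mapDomainLinearMap_single]
  rfl

lemma zeta_catalanElt (q : F) (n : ℕ) : zeta (catalanElt q n) = catalanElt q n := by
  let ρ : (Fin (2 * n) → Letter) → Fin (2 * n) → Letter := fun f i => sigma (f i.rev)
  have hρ : Function.Involutive ρ := fun f => funext fun i => by
    simp only [ρ, Fin.rev_rev, sigma_involutive _]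
  rw [catalanElt, zeta_eq_mapDomainLinearMap, map_sum]
  refine Fintype.sum_bijective ρ hρ.bijective _ _ fun f => ?_
  rw [← zeta_eq_mapDomainLinearMap, show List.ofFn (ρ f) = zetaWord (List.ofFn f) from
    ofFn_sigma_rev f, isCatalan_zetaWord_iff]
  split_ifs with hf
  · rw [zeta_smul_wd, Ccoef_zetaWord q hf]
  · rw [zeta_eq_mapDomainLinearMap, map_zero]

end Zeta

theorem stmt9_general {F : Type*} [Field F] (q : F) :
    (∀ w : List Letter, IsCatalan w →
      IsCatalan ((w.map sigma).reverse) ∧ Ccoef q ((w.map sigma).reverse) = Ccoef q w)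
    ∧ ∀ n : ℕ, zeta (catalanElt q n) = (catalanElt q n : V F) :=
  ⟨fun _ hw => ⟨hw.zetaWord, Ccoef_zetaWord q hw⟩, zeta_catalanElt q⟩

theorem stmt9 {F : Type*} [Field F] (q : F) (hq0 : q ≠ 0)
    (hq : ∀ k : ℕ, 0 < k → q ^ k ≠ 1) :
    (∀ w : List Letter, IsCatalan w →
      IsCatalan ((w.map sigma).reverse) ∧ Ccoef q ((w.map sigma).reverse) = Ccoef q w)
    ∧ ∀ n : ℕ, zeta (catalanElt q n) = (catalanElt q n : V F) :=
  stmt9_general q
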